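/- For all g₁, g₂ ∈ SL(2,ℂ), all m ∈ ℤ, ρ ∈ ℝ, and every f ∈ L²(ℂ), one has T^{(m,ρ)}(g₁)(T^{(m,ρ)}(g₂)f) = T^{(m,ρ)}(g₁·g₂)f as elements of L²(ℂ) (i.e., the two functions agree Lebesgue-almost everywhere on ℂ); thus g ↦ T^{(m,ρ)}(g) is a group homomorphism into the unitary group of L²(ℂ). -/

import Mathlib

open MeasureTheory Complex

noncomputable section

/-- The principal series operator `T^{(m,ρ)}(g)` of `SL(2,ℂ)` acting on functions on `ℂ`. -/
def principalSeriesC (m : ℤ) (ρ : ℝ) (g : Matrix.SpecialLinearGroup (Fin 2) ℂ)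
    (f : ℂ → ℂ) : ℂ → ℂ := fun z =>
  (‖g.1 0 1 * z + g.1 1 1‖ : ℂ) ^ ((-2 + (m : ℂ)) + Complex.I * (ρ : ℂ)) *
    (g.1 0 1 * z + g.1 1 1) ^ (-m) *
    f ((g.1 0 0 * z + g.1 1 0) / (g.1 0 1 * z + g.1 1 1))

/-!
Write `T(g) f (z) = χ(c_g(z)) f(g · z)` with `c_g(z) = g₀₁ z + g₁₁`,
`g · z = (g₀₀ z + g₁₀) / c_g(z)` and `χ(c) = |c|^{-2+m+iρ} c^{-m}`. Then `χ` is multiplicative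
on all of `ℂ`, and off the null line `c_{g₁}(z) = 0` the cocycle identities
`c_{g₁g₂}(z) = c_{g₁}(z) c_{g₂}(g₁ · z)` and `(g₁g₂) · z = g₂ · (g₁ · z)` hold.
-/

namespace PrincipalSeriesC

def multiplier (m : ℤ) (ρ : ℝ) (c : ℂ) : ℂ :=
  (‖c‖ : ℂ) ^ ((-2 + (m : ℂ)) + I * ρ) * c ^ (-m)

theorem multiplier_mul (m : ℤ) (ρ : ℝ) (a b : ℂ) :
    multiplier m ρ (a * b) = multiplier m ρ a * multiplier m ρ b := by
  rw [multiplier, multiplier, multiplier, norm_mul, ofReal_mul,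
    mul_cpow_ofReal_nonneg (norm_nonneg a) (norm_nonneg b), mul_zpow]
  ring

section Moebius

variable {K : Type*} [Field K]

def denom (A : Matrix (Fin 2) (Fin 2) K) (z : K) : K := A 0 1 * z + A 1 1

def num (A : Matrix (Fin 2) (Fin 2) K) (z : K) : K := A 0 0 * z + A 1 0

def moebius (A : Matrix (Fin 2) (Fin 2) K) (z : K) : K := num A z / denom A z

theorem denom_mul (A B : Matrix (Fin 2) (Fin 2) K) {z : K} (hz : denom A z ≠ 0) :
    denom (A * B) z = denom A z * denom B (moebius A z) := by
  simp only [denom, num, moebius, Matrix.mul_apply, Fin.sum_univ_two] at hz ⊢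
  field_simp
  ring

theorem num_mul (A B : Matrix (Fin 2) (Fin 2) K) {z : K} (hz : denom A z ≠ 0) :
    num (A * B) z = denom A z * num B (moebius A z) := by
  simp only [denom, num, moebius, Matrix.mul_apply, Fin.sum_univ_two] at hz ⊢
  field_simp
  ring

theorem moebius_mul (A B : Matrix (Fin 2) (Fin 2) K) {z : K} (hz : denom A z ≠ 0) :
    moebius (A * B) z = moebius B (moebius A z) := by
  rw [moebius, num_mul A B hz, denom_mul A B hz, mul_div_mul_left _ _ hz]
  rfl

end Moebius

theorem specialLinearGroup_col_one_ne_zero {R : Type*} [CommRing R] [Nontrivial R]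
    (g : Matrix.SpecialLinearGroup (Fin 2) R) : g 0 1 ≠ 0 ∨ g 1 1 ≠ 0 := by
  by_contra! h
  have hdet := g.det_coe
  rw [Matrix.det_fin_two, h.1, h.2] at hdet
  simp at hdet

theorem measure_setOf_mul_add_eq_zero {K : Type*} [Field K] [MeasurableSpace K]
    (μ : Measure K) [NullSingletonClass μ] {a b : K} (h : a ≠ 0 ∨ b ≠ 0) :
    μ {z | a * z + b = 0} = 0 := by
  refine Set.Subsingleton.measure_zero (fun x hx y hy => ?_) μ
  have hxy : a * (x - y) = 0 := by linear_combination hx.out - hy.out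
  have ha : a ≠ 0 := by
    rintro rfl
    exact h.resolve_left (fun h0 => h0 rfl) (by simpa using hx.out)
  exact sub_eq_zero.mp ((mul_eq_zero.mp hxy).resolve_left ha)

theorem ae_denom_ne_zero (g : Matrix.SpecialLinearGroup (Fin 2) ℂ) :
    ∀ᵐ z : ℂ, denom (g : Matrix (Fin 2) (Fin 2) ℂ) z ≠ 0 :=
  compl_mem_ae_iff.mpr <|
    measure_setOf_mul_add_eq_zero volume (specialLinearGroup_col_one_ne_zero g)

theorem principalSeriesC_apply (m : ℤ) (ρ : ℝ) (g : Matrix.SpecialLinearGroup (Fin 2) ℂ)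
    (f : ℂ → ℂ) (z : ℂ) :
    principalSeriesC m ρ g f z = multiplier m ρ (denom g z) * f (moebius g z) :=
  rfl

end PrincipalSeriesC

open PrincipalSeriesC in
theorem principalSeriesC_mul (g₁ g₂ : Matrix.SpecialLinearGroup (Fin 2) ℂ) (m : ℤ) (ρ : ℝ)
    (f : ℂ → ℂ) :
    principalSeriesC m ρ g₁ (principalSeriesC m ρ g₂ f)
      =ᵐ[(volume : Measure ℂ)] principalSeriesC m ρ (g₁ * g₂) f := by
  filter_upwards [ae_denom_ne_zero g₁] with z hz
  rw [principalSeriesC_apply, principalSeriesC_apply, principalSeriesC_apply,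
    Matrix.SpecialLinearGroup.coe_mul, moebius_mul _ _ hz, denom_mul _ _ hz, multiplier_mul,
    mul_assoc]
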